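/- arXiv:2508.17758 — 8 statements merged into one kernel-verified Lean document; each statement's English description precedes it below -/
import Mathlib

section
/- The logic CN4K is paraconsistent: there is a CN4K model M and state w such that M, w ⊩+ p ∧ ∼p but M, w ⊮+ q, where p and q are distinct propositional variables. Hence p ∧ ∼p does not entail q. -/
/-- Formulas of the modal language with strong negation. -/
inductive MFm : Type where
  | pv : ℕ → MFm
  | neg : MFm → MFm
  | conj : MFm → MFm → MFm
  | disj : MFm → MFm → MFm
  | imp : MFm → MFm → MFm
  | box : MFm → MFm
  | dia : MFm → MFm

/-- `φ ↔ χ` abbreviates `(φ→χ) ∧ (χ→φ)`. -/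
def MFm.biimp (φ χ : MFm) : MFm := .conj (.imp φ χ) (.imp χ φ)

/-- A CN4K frame: a preordered set with four accessibility relations. -/
structure CN4KFrame where
  W : Type
  le : W → W → Prop
  le_refl : ∀ w, le w w
  le_trans : ∀ u v w, le u v → le v w → le u w
  Rpb : W → W → Prop
  Rnb : W → W → Prop
  Rpd : W → W → Prop
  Rnd : W → W → Prop

/-- A CN4K model over a frame: two persistent valuations. -/
structure CN4KModel (F : CN4KFrame) where
  vp : ℕ → F.W → Prop
  vn : ℕ → F.W → Prop
  vp_mono : ∀ n w w', F.le w w' → vp n w → vp n w'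
  vn_mono : ∀ n w w', F.le w w' → vn n w → vn n w'

/-- Support of truth (`b = true`) and falsity (`b = false`). -/
def CN4KModel.sup {F : CN4KFrame} (M : CN4KModel F) : MFm → Bool → F.W → Prop
  | .pv n, true, w => M.vp n w
  | .pv n, false, w => M.vn n w
  | .neg φ, b, w => M.sup φ (!b) w
  | .conj φ χ, true, w => M.sup φ true w ∧ M.sup χ true w
  | .conj φ χ, false, w => M.sup φ false w ∨ M.sup χ false w
  | .disj φ χ, true, w => M.sup φ true w ∨ M.sup χ true w
  | .disj φ χ, false, w => M.sup φ false w ∧ M.sup χ false w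
  | .imp φ χ, true, w => ∀ w', F.le w w' → M.sup φ true w' → M.sup χ true w'
  | .imp φ χ, false, w => M.sup φ true w ∧ M.sup χ false w
  | .box φ, true, w => ∀ w', F.le w w' → ∀ u, F.Rpb w' u → M.sup φ true u
  | .box φ, false, w => ∀ w', F.le w w' → ∃ u, F.Rnb w' u ∧ M.sup φ false u
  | .dia φ, true, w => ∀ w', F.le w w' → ∃ u, F.Rpd w' u ∧ M.sup φ true u
  | .dia φ, false, w => ∀ w', F.le w w' → ∀ u, F.Rnd w' u → M.sup φ false u

/-- Validity in CN4K: positive support at every state of every model. -/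
def CN4KValid (φ : MFm) : Prop :=
  ∀ (F : CN4KFrame) (M : CN4KModel F) (w : F.W), M.sup φ true w

/-- Semantic entailment in CN4K. -/
def CN4KEntails (Γ : Set MFm) (χ : MFm) : Prop :=
  ∀ (F : CN4KFrame) (M : CN4KModel F) (w : F.W),
    (∀ φ ∈ Γ, M.sup φ true w) → M.sup χ true w

def CN4KFrame.point : CN4KFrame where
  W := Unit
  le _ _ := True
  le_refl _ := trivial
  le_trans _ _ _ _ _ := trivial
  Rpb _ _ := False
  Rnb _ _ := False
  Rpd _ _ := False
  Rnd _ _ := False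

def CN4KModel.glut (F : CN4KFrame) (s : Set ℕ) : CN4KModel F where
  vp n _ := n ∈ s
  vn n _ := n ∈ s
  vp_mono _ _ _ _ h := h
  vn_mono _ _ _ _ h := h

namespace CN4KModel

variable {F : CN4KFrame}

theorem sup_conj_neg_true_iff (M : CN4KModel F) (φ : MFm) (w : F.W) :
    M.sup (.conj φ (.neg φ)) true w ↔ M.sup φ true w ∧ M.sup φ false w :=
  Iff.rfl

theorem glut_sup_pv_iff (s : Set ℕ) (n : ℕ) (b : Bool) (w : F.W) :
    (glut F s).sup (.pv n) b w ↔ n ∈ s := by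
  cases b <;> rfl

end CN4KModel

theorem not_cn4kEntails_singleton {φ χ : MFm} {F : CN4KFrame} (M : CN4KModel F) (w : F.W)
    (hφ : M.sup φ true w) (hχ : ¬ M.sup χ true w) : ¬ CN4KEntails {φ} χ :=
  fun h => hχ (h F M w fun _ hψ => hψ ▸ hφ)

/-- Paraconsistency of CN4K: some model and state positively support `p ∧ ∼p`
but not `q` (for distinct variables `p`, `q`); hence `p ∧ ∼p` does not entail `q`. -/
theorem cn4k_paraconsistent :
    (∃ (F : CN4KFrame) (M : CN4KModel F) (w : F.W),
      M.sup (.conj (.pv 0) (.neg (.pv 0))) true w ∧ ¬ M.sup (.pv 1) true w) ∧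
    ¬ CN4KEntails {MFm.conj (.pv 0) (.neg (.pv 0))} (.pv 1) := by
  obtain ⟨w⟩ : Nonempty CN4KFrame.point.W := ⟨()⟩
  set M := CN4KModel.glut CN4KFrame.point {0}
  have hpv0 : M.sup (.conj (.pv 0) (.neg (.pv 0))) true w :=
    (M.sup_conj_neg_true_iff _ w).2
      ⟨(CN4KModel.glut_sup_pv_iff _ _ _ w).2 rfl, (CN4KModel.glut_sup_pv_iff _ _ _ w).2 rfl⟩
  have hpv1 : ¬ M.sup (.pv 1) true w := by
    simp [M, CN4KModel.glut_sup_pv_iff]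
  exact ⟨⟨_, M, w, hpv0, hpv1⟩, not_cn4kEntails_singleton M w hpv0 hpv1⟩
end

section
/- In every CN4K model whose frame satisfies R+□ = R-◇ and R+◇ = R-□ (a ⋈-birelational frame), the axiom □φ ↔ ∼◇∼φ is valid, i.e., at every state w, w ⊩+ □φ iff w ⊩+ ∼◇∼φ. -/
theorem CN4KModel.sup_box_iff_sup_neg_dia_neg {F : CN4KFrame} (h : F.Rpb = F.Rnd)
    (M : CN4KModel F) (φ : MFm) (w : F.W) :
    M.sup (.box φ) true w ↔ M.sup (.neg (.dia (.neg φ))) true w := by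
  simp only [CN4KModel.sup, h, Bool.not_true, Bool.not_false]

theorem CN4KModel.sup_biimp_of_forall_iff {F : CN4KFrame} (M : CN4KModel F) {φ χ : MFm}
    (h : ∀ v, M.sup φ true v ↔ M.sup χ true v) (w : F.W) :
    M.sup (φ.biimp χ) true w :=
  ⟨fun v _ => (h v).mp, fun v _ => (h v).mpr⟩

theorem cn4k_bowtie_axiom_general (F : CN4KFrame) (h1 : F.Rpb = F.Rnd)
    (M : CN4KModel F) (φ : MFm) (w : F.W) :
    (M.sup (.box φ) true w ↔ M.sup (.neg (.dia (.neg φ))) true w) ∧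
    M.sup (MFm.biimp (.box φ) (.neg (.dia (.neg φ)))) true w :=
  ⟨M.sup_box_iff_sup_neg_dia_neg h1 φ w,
    M.sup_biimp_of_forall_iff (M.sup_box_iff_sup_neg_dia_neg h1 φ) w⟩

/-- On ⋈-birelational frames (`R⁺□ = R⁻◇` and `R⁺◇ = R⁻□`), the axiom
`□φ ↔ ∼◇∼φ` is valid. -/
theorem cn4k_bowtie_axiom (F : CN4KFrame) (h1 : F.Rpb = F.Rnd) (h2 : F.Rpd = F.Rnb)
    (M : CN4KModel F) (φ : MFm) (w : F.W) :
    (M.sup (.box φ) true w ↔ M.sup (.neg (.dia (.neg φ))) true w) ∧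
    M.sup (MFm.biimp (.box φ) (.neg (.dia (.neg φ)))) true w :=
  cn4k_bowtie_axiom_general F h1 M φ w
end

section
/- In every CN4K model whose frame satisfies R+□ = R+◇ (part of ±-birelationality), the axiom □(φ→χ) → (◇φ → ◇χ) is valid. -/
theorem CN4KModel.sup_box_imp_dia_imp_dia_of_Rpd_le_Rpb {F : CN4KFrame}
    (hR : ∀ w u, F.Rpd w u → F.Rpb w u) (M : CN4KModel F) (φ χ : MFm) (w : F.W) :
    M.sup (.imp (.box (.imp φ χ)) (.imp (.dia φ) (.dia χ))) true w := by
  intro w₁ _ hbox w₂ h₁₂ hdia w₃ h₂₃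
  obtain ⟨u, hu, hφ⟩ := hdia w₃ h₂₃
  have himp : M.sup (.imp φ χ) true u := hbox w₃ (F.le_trans _ _ _ h₁₂ h₂₃) u (hR _ _ hu)
  exact ⟨u, hu, himp u (F.le_refl u) hφ⟩

/-- On frames with `R⁺□ = R⁺◇`, the axiom `□(φ→χ) → (◇φ → ◇χ)` is valid. -/
theorem cn4k_pm_axiom (F : CN4KFrame) (h : F.Rpb = F.Rpd)
    (M : CN4KModel F) (φ χ : MFm) (w : F.W) :
    M.sup (.imp (.box (.imp φ χ)) (.imp (.dia φ) (.dia χ))) true w :=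
  M.sup_box_imp_dia_imp_dia_of_Rpd_le_Rpb (fun _ _ hu => h ▸ hu) φ χ w
end

section
/- In every CN4K model whose frame satisfies R+□ = R-□ (part of ⋎-birelationality), the axiom □(φ→χ) → (∼□∼φ → ∼□∼χ) is valid. -/
/-! A witness of `∼□∼φ` is an `R⁻□`-successor, hence, when `R⁺□ = R⁻□`, also an `R⁺□`-successor at
which `□(φ→χ)` applies; the same state then witnesses `∼□∼χ`. -/

namespace CN4KModel

variable {F : CN4KFrame} (M : CN4KModel F)

theorem sup_neg_box_neg_true_iff (φ : MFm) (w : F.W) :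
    M.sup (.neg (.box (.neg φ))) true w ↔ ∀ w', F.le w w' → ∃ u, F.Rnb w' u ∧ M.sup φ true u :=
  Iff.rfl

theorem sup_of_sup_box_imp {φ χ : MFm} {w w' u : F.W}
    (hbox : M.sup (.box (.imp φ χ)) true w) (hw : F.le w w') (hu : F.Rpb w' u)
    (hφ : M.sup φ true u) : M.sup χ true u :=
  hbox w' hw u hu u (F.le_refl u) hφ

end CN4KModel

/-- On frames with `R⁺□ = R⁻□`, the axiom `□(φ→χ) → (∼□∼φ → ∼□∼χ)` is valid. -/
theorem cn4k_curlyvee_axiom (F : CN4KFrame) (h : F.Rpb = F.Rnb)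
    (M : CN4KModel F) (φ χ : MFm) (w : F.W) :
    M.sup (.imp (.box (.imp φ χ))
      (.imp (.neg (.box (.neg φ))) (.neg (.box (.neg χ))))) true w := by
  intro w₁ _ hbox w₂ hw₁₂ hφ
  rw [CN4KModel.sup_neg_box_neg_true_iff] at hφ ⊢
  intro w₃ hw₂₃
  obtain ⟨u, hu, hφu⟩ := hφ w₃ hw₂₃
  exact ⟨u, hu, M.sup_of_sup_box_imp hbox (F.le_trans _ _ _ hw₁₂ hw₂₃) (h ▸ hu) hφu⟩
end

section
/- There is a CN4K frame F2 over W = {w0, w1} with w0 ≤ w1, S+□ = S-□ = S-◇ = {(w0,w1),(w1,w1)}, S+◇ = ∅, and a model on F2 with w1 ⊩+ p, such that w1 ⊩+ ∼□∼p but w1 ⊮+ ◇p; hence ◇p ↔ ∼□∼p fails on F2 even though F2 validates ∼◇∼(φ→χ)→(◇φ→◇χ). -/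
/-- The frame F₂ over `W = {w₀, w₁}` (here `false` is w₀, `true` is w₁, with `w₀ ≤ w₁`):
`S⁺□ = S⁻□ = S⁻◇ = {(w₀,w₁),(w₁,w₁)}`, `S⁺◇ = ∅`. -/
def F2 : CN4KFrame where
  W := Bool
  le := (· ≤ ·)
  le_refl := fun w => le_refl w
  le_trans := fun _ _ _ h1 h2 => le_trans h1 h2
  Rpb := fun _ b => b = true
  Rnb := fun _ b => b = true
  Rpd := fun _ _ => False
  Rnd := fun _ b => b = true

/-! Since `S⁺◇` is empty, `◇φ` is supported at no state of any model on F₂, so every implication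
with `◇φ` as antecedent is valid there, in particular the consequent `◇φ → ◇χ` of `⋎◇`. On the
other hand `S⁻□` reaches `w₁` from everywhere, so `∼□∼p` holds wherever `p` holds at `w₁`. -/

namespace CN4KModel

variable {F : CN4KFrame} (M : CN4KModel F)

theorem sup_imp_of_forall_not_sup {φ : MFm} (hφ : ∀ w, ¬ M.sup φ true w) (χ : MFm) (w : F.W) :
    M.sup (.imp φ χ) true w :=
  fun w' _ h => absurd h (hφ w')

theorem not_sup_biimp_of_not_sup {φ χ : MFm} {w : F.W} (hχ : M.sup χ true w)
    (hφ : ¬ M.sup φ true w) : ¬ M.sup (MFm.biimp φ χ) true w :=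
  fun h => hφ (h.2 w (F.le_refl w) hχ)

theorem not_sup_dia_of_forall_not_Rpd (hR : ∀ w u, ¬ F.Rpd w u) (φ : MFm) (w : F.W) :
    ¬ M.sup (.dia φ) true w :=
  fun h => let ⟨u, hu, _⟩ := h w (F.le_refl w); hR w u hu

end CN4KModel

theorem F2.not_sup_dia (M : CN4KModel F2) (φ : MFm) (w : F2.W) : ¬ M.sup (.dia φ) true w :=
  M.not_sup_dia_of_forall_not_Rpd (fun _ _ h => h) φ w

def F2.modelAtTop : CN4KModel F2 where
  vp n w := n = 0 ∧ w = true
  vn _ _ := False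
  vp_mono _ _ _ hle hv := ⟨hv.1, top_unique (hv.2 ▸ hle)⟩
  vn_mono _ _ _ _ h := h

/-- F₂ validates `⋎◇ := ∼◇∼(φ→χ)→(◇φ→◇χ)`, yet there is a model on F₂ with
`w₁ ⊩⁺ p` in which `w₁ ⊩⁺ ∼□∼p` but `w₁ ⊮⁺ ◇p`; hence `◇p ↔ ∼□∼p` fails on F₂. -/
theorem cn4k_F2_separates :
    (∀ (M : CN4KModel F2) (φ χ : MFm) (w : F2.W),
      M.sup (.imp (.neg (.dia (.neg (.imp φ χ)))) (.imp (.dia φ) (.dia χ))) true w) ∧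
    ∃ M : CN4KModel F2, M.vp 0 true ∧
      M.sup (.neg (.box (.neg (.pv 0)))) true true ∧
      ¬ M.sup (.dia (.pv 0)) true true ∧
      ¬ M.sup (MFm.biimp (.dia (.pv 0)) (.neg (.box (.neg (.pv 0))))) true true := by
  have hbox : F2.modelAtTop.sup (.neg (.box (.neg (.pv 0)))) true true :=
    fun _ _ => ⟨true, rfl, rfl, rfl⟩
  refine ⟨fun M φ χ w => ?_, F2.modelAtTop, ⟨rfl, rfl⟩, hbox, F2.not_sup_dia _ _ _,
    F2.modelAtTop.not_sup_biimp_of_not_sup hbox (F2.not_sup_dia _ _ _)⟩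
  exact fun w' _ _ => M.sup_imp_of_forall_not_sup (F2.not_sup_dia M φ) (.dia χ) w'
end

section
/- If Γ ⊬_HCN4K φ, then there exists a saturated set Γ' ⊇ Γ such that Γ' ⊬_HCN4K φ, where a set Ξ is saturated if it is deductively closed under HCN4K-derivability and prime (ξ∨ξ' ∈ Ξ implies ξ ∈ Ξ or ξ' ∈ Ξ). -/
/-- Axiom schemes of the Hilbert calculus HCN4K: positive intuitionistic axioms,
strong-negation axioms of N4, and the modal axioms ⊤□, ∧□, ⊤◇, ∧◇. -/
inductive HAx : MFm → Prop
  | a1 (φ χ : MFm) : HAx (.imp φ (.imp χ φ))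
  | a2 (φ χ ψ : MFm) :
      HAx (.imp (.imp φ (.imp χ ψ)) (.imp (.imp φ χ) (.imp φ ψ)))
  | a3 (φ χ : MFm) : HAx (.imp φ (.imp χ (.conj φ χ)))
  | a4 (φ χ : MFm) : HAx (.imp (.conj φ χ) φ)
  | a5 (φ χ : MFm) : HAx (.imp (.conj φ χ) χ)
  | a6 (φ χ : MFm) : HAx (.imp φ (.disj φ χ))
  | a7 (φ χ : MFm) : HAx (.imp χ (.disj φ χ))
  | a8 (φ χ ψ : MFm) :
      HAx (.imp (.imp φ ψ) (.imp (.imp χ ψ) (.imp (.disj φ χ) ψ)))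
  | dneg (φ : MFm) : HAx (MFm.biimp (.neg (.neg φ)) φ)
  | demConj (φ χ : MFm) :
      HAx (MFm.biimp (.neg (.conj φ χ)) (.disj (.neg φ) (.neg χ)))
  | demDisj (φ χ : MFm) :
      HAx (MFm.biimp (.neg (.disj φ χ)) (.conj (.neg φ) (.neg χ)))
  | demImp (φ χ : MFm) :
      HAx (MFm.biimp (.neg (.imp φ χ)) (.conj φ (.neg χ)))
  | topBox (φ : MFm) : HAx (.box (.imp φ φ))
  | conjBox (φ χ : MFm) :
      HAx (.imp (.conj (.box φ) (.box χ)) (.box (.conj φ χ)))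
  | topDia (φ : MFm) : HAx (.neg (.dia (.neg (.imp φ φ))))
  | conjDia (φ χ : MFm) :
      HAx (.imp (.conj (.neg (.dia φ)) (.neg (.dia χ))) (.neg (.dia (.disj φ χ))))

/-- Derivability in HCN4K from a set of assumptions: modus ponens may use
assumptions; the modal monotonicity rules apply to theorems only. -/
inductive HProv : Set MFm → MFm → Prop
  | ax {Γ φ} : HAx φ → HProv Γ φ
  | hyp {Γ φ} : φ ∈ Γ → HProv Γ φ
  | mp {Γ φ χ} : HProv Γ (.imp φ χ) → HProv Γ φ → HProv Γ χ
  | rBox {Γ φ χ} : HProv ∅ (.imp φ χ) → HProv Γ (.imp (.box φ) (.box χ))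
  | rDia {Γ φ χ} : HProv ∅ (.imp φ χ) → HProv Γ (.imp (.dia φ) (.dia χ))
  | rBoxN {Γ φ χ} : HProv ∅ (.imp (.neg φ) (.neg χ)) →
      HProv Γ (.imp (.neg (.box φ)) (.neg (.box χ)))
  | rDiaN {Γ φ χ} : HProv ∅ (.imp (.neg φ) (.neg χ)) →
      HProv Γ (.imp (.neg (.dia φ)) (.neg (.dia χ)))

/-- A set is saturated if it is deductively closed and prime. -/
def Saturated (Ξ : Set MFm) : Prop :=
  (∀ φ, HProv Ξ φ → φ ∈ Ξ) ∧
  (∀ φ χ, MFm.disj φ χ ∈ Ξ → φ ∈ Ξ ∨ χ ∈ Ξ)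

/-! The set of supersets of `Γ` not deriving `φ` is closed under unions of chains, since
derivations are finite, so Zorn's lemma gives a maximal one `M`. By the deduction theorem
(valid because the modal rules act on theorems only), adding any `ψ ∉ M` to `M` makes `φ`
derivable; this forces every consequence of `M` into `M`, and, by disjunction elimination,
one disjunct of every disjunction in `M`. -/

namespace HProv

variable {Γ : Set MFm} {φ ψ χ : MFm}

theorem mono {Δ : Set MFm} (h : HProv Γ φ) (hΓΔ : Γ ⊆ Δ) : HProv Δ φ := by
  induction h generalizing Δ with
  | ax a => exact .ax a
  | hyp m => exact .hyp (hΓΔ m)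
  | mp _ _ ih₁ ih₂ => exact .mp (ih₁ hΓΔ) (ih₂ hΓΔ)
  | rBox h₀ => exact .rBox h₀
  | rDia h₀ => exact .rDia h₀
  | rBoxN h₀ => exact .rBoxN h₀
  | rDiaN h₀ => exact .rDiaN h₀

theorem imp_self (Γ : Set MFm) (φ : MFm) : HProv Γ (.imp φ φ) :=
  .mp (.mp (.ax (.a2 φ (.imp φ φ) φ)) (.ax (.a1 φ (.imp φ φ)))) (.ax (.a1 φ φ))

theorem imp_intro (h : HProv Γ φ) : HProv Γ (.imp ψ φ) :=
  .mp (.ax (.a1 φ ψ)) h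

theorem deduction (h : HProv (insert ψ Γ) φ) : HProv Γ (.imp ψ φ) := by
  generalize hΔ : insert ψ Γ = Δ at h
  induction h with
  | ax a => exact imp_intro (.ax a)
  | @hyp _ φ m =>
    subst hΔ
    rcases m with rfl | m
    · exact imp_self Γ φ
    · exact imp_intro (.hyp m)
  | @mp _ χ φ _ _ ih₁ ih₂ => exact .mp (.mp (.ax (.a2 ψ χ φ)) (ih₁ hΔ)) (ih₂ hΔ)
  | rBox h₀ => exact imp_intro (.rBox h₀)
  | rDia h₀ => exact imp_intro (.rDia h₀)
  | rBoxN h₀ => exact imp_intro (.rBoxN h₀)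
  | rDiaN h₀ => exact imp_intro (.rDiaN h₀)

theorem cut (hψ : HProv Γ ψ) (h : HProv (insert ψ Γ) φ) : HProv Γ φ :=
  .mp (deduction h) hψ

theorem disj_elim (h : HProv Γ (.disj ψ χ)) (hψ : HProv (insert ψ Γ) φ)
    (hχ : HProv (insert χ Γ) φ) : HProv Γ φ :=
  .mp (.mp (.mp (.ax (.a8 ψ χ φ)) (deduction hψ)) (deduction hχ)) h

theorem exists_mem_of_sUnion {c : Set (Set MFm)} (hc : IsChain (· ⊆ ·) c)
    (hne : c.Nonempty) (h : HProv (⋃₀ c) φ) : ∃ Θ ∈ c, HProv Θ φ := by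
  obtain ⟨Θ₀, hΘ₀⟩ := hne
  generalize hΔ : ⋃₀ c = Δ at h
  induction h with
  | ax a => exact ⟨Θ₀, hΘ₀, .ax a⟩
  | hyp m =>
    subst hΔ
    obtain ⟨Θ, hΘ, hm⟩ := m
    exact ⟨Θ, hΘ, .hyp hm⟩
  | mp _ _ ih₁ ih₂ =>
    obtain ⟨Θ₁, hΘ₁, h₁⟩ := ih₁ hΔ
    obtain ⟨Θ₂, hΘ₂, h₂⟩ := ih₂ hΔ
    rcases hc.total hΘ₁ hΘ₂ with h₁₂ | h₂₁
    · exact ⟨Θ₂, hΘ₂, .mp (h₁.mono h₁₂) h₂⟩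
    · exact ⟨Θ₁, hΘ₁, .mp h₁ (h₂.mono h₂₁)⟩
  | rBox h₀ => exact ⟨Θ₀, hΘ₀, .rBox h₀⟩
  | rDia h₀ => exact ⟨Θ₀, hΘ₀, .rDia h₀⟩
  | rBoxN h₀ => exact ⟨Θ₀, hΘ₀, .rBoxN h₀⟩
  | rDiaN h₀ => exact ⟨Θ₀, hΘ₀, .rDiaN h₀⟩

theorem exists_maximal_not_prov (h : ¬HProv Γ φ) :
    ∃ M, Γ ⊆ M ∧ Maximal (fun Δ => ¬HProv Δ φ) M :=
  zorn_subset_nonempty {Δ | ¬HProv Δ φ}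
    (fun c hcS hc hne => ⟨⋃₀ c,
      fun hprov => (exists_mem_of_sUnion hc hne hprov).elim fun _ ⟨hΘ, hp⟩ => hcS hΘ hp,
      fun _ => Set.subset_sUnion_of_mem⟩) Γ h

end HProv

theorem Maximal.prov_insert_of_notMem {M : Set MFm} {φ ψ : MFm}
    (hM : Maximal (fun Δ => ¬HProv Δ φ) M) (hψ : ψ ∉ M) : HProv (insert ψ M) φ :=
  not_not.mp fun h => hψ (hM.mem_of_prop_insert h)

theorem Maximal.saturated {M : Set MFm} {φ : MFm} (hM : Maximal (fun Δ => ¬HProv Δ φ) M) :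
    Saturated M := by
  refine ⟨fun ψ hψ => ?_, fun ψ χ hψχ => ?_⟩
  · by_contra hψM
    exact hM.prop (hψ.cut (hM.prov_insert_of_notMem hψM))
  · by_contra! ⟨hψM, hχM⟩
    exact hM.prop ((HProv.hyp hψχ).disj_elim (hM.prov_insert_of_notMem hψM)
      (hM.prov_insert_of_notMem hχM))

/-- Lindenbaum-style lemma: any set not deriving `φ` extends to a saturated set
not deriving `φ`. -/
theorem hcn4k_lindenbaum (Γ : Set MFm) (φ : MFm) (h : ¬ HProv Γ φ) :
    ∃ Γ' : Set MFm, Γ ⊆ Γ' ∧ Saturated Γ' ∧ ¬ HProv Γ' φ := by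
  obtain ⟨M, hΓM, hM⟩ := HProv.exists_maximal_not_prov h
  exact ⟨M, hΓM, hM.saturated, hM.prop⟩
end

section
/- Soundness of the Hilbert calculus: if Γ ⊢_HCN4K φ, then Γ ⊨_CN4K φ, i.e., in every CN4K model and state positively supporting all of Γ, φ is positively supported. -/
namespace CN4KModel

variable {F : CN4KFrame} (M : CN4KModel F)

theorem sup_mono {φ : MFm} {b : Bool} {w w' : F.W} (hle : F.le w w') (h : M.sup φ b w) :
    M.sup φ b w' := by
  induction φ generalizing b w w' with
  | pv n =>
    cases b
    · exact M.vn_mono n w w' hle h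
    · exact M.vp_mono n w w' hle h
  | neg φ ih => exact ih hle h
  | conj φ χ ihφ ihχ =>
    cases b
    · exact h.imp (ihφ hle) (ihχ hle)
    · exact ⟨ihφ hle h.1, ihχ hle h.2⟩
  | disj φ χ ihφ ihχ =>
    cases b
    · exact ⟨ihφ hle h.1, ihχ hle h.2⟩
    · exact h.imp (ihφ hle) (ihχ hle)
  | imp φ χ ihφ ihχ =>
    cases b
    · exact ⟨ihφ hle h.1, ihχ hle h.2⟩
    · exact fun v hv => h v (F.le_trans _ _ _ hle hv)
  | box φ _ | dia φ _ => cases b <;> exact fun v hv => h v (F.le_trans _ _ _ hle hv)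

end CN4KModel

theorem HAx.valid {φ : MFm} (h : HAx φ) : CN4KValid φ := by
  intro F M w
  cases h with
  | a1 φ χ => exact fun _ _ hφ _ hle _ => M.sup_mono hle hφ
  | a2 φ χ ψ =>
    intro _ _ hφχψ _ hle hφχ u hu hφ
    exact hφχψ u (F.le_trans _ _ _ hle hu) hφ u (F.le_refl u) (hφχ u hu hφ)
  | a3 φ χ => exact fun _ _ hφ _ hle hχ => ⟨M.sup_mono hle hφ, hχ⟩
  | a4 φ χ => exact fun _ _ h => h.1
  | a5 φ χ => exact fun _ _ h => h.2
  | a6 φ χ => exact fun _ _ => Or.inl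
  | a7 φ χ => exact fun _ _ => Or.inr
  | a8 φ χ ψ =>
    intro _ _ hφψ _ hle hχψ u hu hφχ
    exact hφχ.elim (hφψ u (F.le_trans _ _ _ hle hu)) (hχψ u hu)
  | dneg φ => exact ⟨fun _ _ => id, fun _ _ => id⟩
  | demConj φ χ => exact ⟨fun _ _ => id, fun _ _ => id⟩
  | demDisj φ χ => exact ⟨fun _ _ => id, fun _ _ => id⟩
  | demImp φ χ => exact ⟨fun _ _ => id, fun _ _ => id⟩
  | topBox φ => exact fun _ _ _ _ _ _ => id
  | conjBox φ χ => exact fun _ _ h v hv u hu => ⟨h.1 v hv u hu, h.2 v hv u hu⟩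
  | topDia φ => exact fun _ _ _ _ _ _ => id
  | conjDia φ χ => exact fun _ _ h v hv u hu => ⟨h.1 v hv u hu, h.2 v hv u hu⟩

namespace CN4KValid

variable {φ χ : MFm}

theorem of_entails_empty (h : CN4KEntails ∅ φ) : CN4KValid φ :=
  fun F M w => h F M w fun _ hψ => absurd hψ (Set.notMem_empty _)

theorem sup_of_imp (h : CN4KValid (.imp φ χ)) {F : CN4KFrame} (M : CN4KModel F)
    {u : F.W} (hφ : M.sup φ true u) : M.sup χ true u :=
  h F M u u (F.le_refl u) hφ

theorem imp_box (h : CN4KValid (.imp φ χ)) : CN4KValid (.imp (.box φ) (.box χ)) :=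
  fun _ M _ _ _ hφ v hv u hu => h.sup_of_imp M (hφ v hv u hu)

theorem imp_dia (h : CN4KValid (.imp φ χ)) : CN4KValid (.imp (.dia φ) (.dia χ)) :=
  fun _ M _ _ _ hφ v hv =>
    let ⟨u, hu, hφu⟩ := hφ v hv
    ⟨u, hu, h.sup_of_imp M hφu⟩

theorem imp_neg_box (h : CN4KValid (.imp (.neg φ) (.neg χ))) :
    CN4KValid (.imp (.neg (.box φ)) (.neg (.box χ))) :=
  fun _ M _ _ _ hφ v hv =>
    let ⟨u, hu, hφu⟩ := hφ v hv
    ⟨u, hu, h.sup_of_imp M hφu⟩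

theorem imp_neg_dia (h : CN4KValid (.imp (.neg φ) (.neg χ))) :
    CN4KValid (.imp (.neg (.dia φ)) (.neg (.dia χ))) :=
  fun _ M _ _ _ hφ v hv u hu => h.sup_of_imp M (hφ v hv u hu)

end CN4KValid

namespace CN4KEntails

variable {Γ : Set MFm} {φ χ : MFm}

theorem of_valid (h : CN4KValid φ) : CN4KEntails Γ φ :=
  fun F M w _ => h F M w

theorem of_mem (h : φ ∈ Γ) : CN4KEntails Γ φ :=
  fun _ _ _ hΓ => hΓ φ h

theorem mp (hφχ : CN4KEntails Γ (.imp φ χ)) (hφ : CN4KEntails Γ φ) : CN4KEntails Γ χ :=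
  fun F M w hΓ => hφχ F M w hΓ w (F.le_refl w) (hφ F M w hΓ)

end CN4KEntails

/-- Soundness of HCN4K with respect to CN4K semantics. -/
theorem hcn4k_soundness (Γ : Set MFm) (φ : MFm) (h : HProv Γ φ) :
    CN4KEntails Γ φ := by
  induction h with
  | ax ha => exact .of_valid ha.valid
  | hyp hmem => exact .of_mem hmem
  | mp _ _ ihφχ ihφ => exact ihφχ.mp ihφ
  | rBox _ ih => exact .of_valid (CN4KValid.of_entails_empty ih).imp_box
  | rDia _ ih => exact .of_valid (CN4KValid.of_entails_empty ih).imp_dia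
  | rBoxN _ ih => exact .of_valid (CN4KValid.of_entails_empty ih).imp_neg_box
  | rDiaN _ ih => exact .of_valid (CN4KValid.of_entails_empty ih).imp_neg_dia
end

section
/- Disjunction property and constructive falsity for CN4K: if φ∨χ is valid in CN4K then φ is valid or χ is valid; and if ∼(φ∧χ) is valid in CN4K then ∼φ is valid or ∼χ is valid. -/
/-!
Given countermodels to `φ` and to `χ`, put their disjoint union above a fresh root. Each
component is a generated submodel, so its states support exactly what they support in the
original countermodel; by persistence, whatever the root supports is supported throughout both
components. So the root supports neither `φ` nor `χ`, hence not `φ ∨ χ`. The argument is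
uniform in the polarity of support, and `∼(φ ∧ χ)` is supported exactly where `φ` or `χ` is
supported as false, so constructive falsity follows in the same way.
-/

theorem CN4KModel.sup_mono_s18 {F : CN4KFrame} (M : CN4KModel F) (φ : MFm) :
    ∀ (b : Bool) {w w' : F.W}, F.le w w' → M.sup φ b w → M.sup φ b w' := by
  induction φ with
  | pv n =>
    rintro (_ | _) w w' hle h
    exacts [M.vn_mono n w w' hle h, M.vp_mono n w w' hle h]
  | neg φ ih => exact fun b _ _ hle => ih (!b) hle
  | conj φ χ ihφ ihχ =>
    rintro (_ | _) w w' hle h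
    exacts [h.imp (ihφ false hle) (ihχ false hle), ⟨ihφ true hle h.1, ihχ true hle h.2⟩]
  | disj φ χ ihφ ihχ =>
    rintro (_ | _) w w' hle h
    exacts [⟨ihφ false hle h.1, ihχ false hle h.2⟩, h.imp (ihφ true hle) (ihχ true hle)]
  | imp φ χ ihφ ihχ =>
    rintro (_ | _) w w' hle h
    exacts [⟨ihφ true hle h.1, ihχ false hle h.2⟩,
      fun u hu => h u (F.le_trans w w' u hle hu)]
  | box φ | dia φ =>
    rintro (_ | _) w w' hle h <;> exact fun u hu => h u (F.le_trans w w' u hle hu)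

section RootedSum

variable {ι : Type} {α : ι → Type}

/-- The root's accessibility relations play no role in the argument; relating it to every point
lets this one construction serve for the order and for all four accessibility relations. -/
inductive RootedRel (r : ∀ i, α i → α i → Prop) : Option (Σ i, α i) → Option (Σ i, α i) → Prop
  | root (a : Option (Σ i, α i)) : RootedRel r none a
  | fiber {i : ι} {x y : α i} : r i x y → RootedRel r (some ⟨i, x⟩) (some ⟨i, y⟩)

theorem RootedRel.forall_some_iff {r : ∀ i, α i → α i → Prop} {i : ι} {x : α i}
    {P : Option (Σ i, α i) → Prop} :
    (∀ a, RootedRel r (some ⟨i, x⟩) a → P a) ↔ ∀ y, r i x y → P (some ⟨i, y⟩) :=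
  ⟨fun h y hxy => h _ (.fiber hxy), fun h _ hxa => by cases hxa with | fiber hxy => exact h _ hxy⟩

theorem RootedRel.exists_some_iff {r : ∀ i, α i → α i → Prop} {i : ι} {x : α i}
    {P : Option (Σ i, α i) → Prop} :
    (∃ a, RootedRel r (some ⟨i, x⟩) a ∧ P a) ↔ ∃ y, r i x y ∧ P (some ⟨i, y⟩) := by
  constructor
  · rintro ⟨_, hxa, ha⟩
    cases hxa with | fiber hxy => exact ⟨_, hxy, ha⟩
  · rintro ⟨y, hxy, hy⟩
    exact ⟨_, .fiber hxy, hy⟩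

end RootedSum

abbrev CN4KFrame.rootedSum {ι : Type} (F : ι → CN4KFrame) : CN4KFrame where
  W := Option (Σ i, (F i).W)
  le := RootedRel fun i => (F i).le
  le_refl
    | none => .root none
    | some ⟨i, x⟩ => .fiber ((F i).le_refl x)
  le_trans := by
    rintro _ _ w (_ | ⟨hxy⟩) hvw
    · exact .root w
    · cases hvw with | fiber hyz => exact .fiber ((F _).le_trans _ _ _ hxy hyz)
  Rpb := RootedRel fun i => (F i).Rpb
  Rnb := RootedRel fun i => (F i).Rnb
  Rpd := RootedRel fun i => (F i).Rpd
  Rnd := RootedRel fun i => (F i).Rnd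

def CN4KModel.rootedSum {ι : Type} {F : ι → CN4KFrame} (M : ∀ i, CN4KModel (F i)) :
    CN4KModel (CN4KFrame.rootedSum F) where
  vp n
    | none => False
    | some ⟨i, x⟩ => (M i).vp n x
  vn n
    | none => False
    | some ⟨i, x⟩ => (M i).vn n x
  vp_mono := by
    rintro n _ _ (_ | ⟨hxy⟩) h
    exacts [h.elim, (M _).vp_mono n _ _ hxy h]
  vn_mono := by
    rintro n _ _ (_ | ⟨hxy⟩) h
    exacts [h.elim, (M _).vn_mono n _ _ hxy h]

theorem CN4KModel.sup_rootedSum_some {ι : Type} {F : ι → CN4KFrame} (M : ∀ i, CN4KModel (F i))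
    (φ : MFm) (b : Bool) (i : ι) (x : (F i).W) :
    (CN4KModel.rootedSum M).sup φ b (some ⟨i, x⟩) ↔ (M i).sup φ b x := by
  induction φ generalizing b x with
  | pv n => cases b <;> rfl
  | neg φ ih => exact ih (!b) x
  | conj φ χ ihφ ihχ | disj φ χ ihφ ihχ | imp φ χ ihφ ihχ =>
    cases b <;> simp only [CN4KModel.sup, RootedRel.forall_some_iff, ihφ, ihχ]
  | box φ ih | dia φ ih =>
    cases b <;> simp only [CN4KModel.sup, RootedRel.forall_some_iff,
      RootedRel.exists_some_iff, ih]

theorem CN4KModel.exists_forall_sup_of_forall_exists_sup {ι : Type} (φ : ι → MFm) (b : Bool)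
    (h : ∀ (F : CN4KFrame) (M : CN4KModel F) (w : F.W), ∃ i, M.sup (φ i) b w) :
    ∃ i, ∀ (F : CN4KFrame) (M : CN4KModel F) (w : F.W), M.sup (φ i) b w := by
  by_contra! hcounter
  choose F M w hw using hcounter
  obtain ⟨i, hroot⟩ := h _ (CN4KModel.rootedSum M) none
  have hi := (CN4KModel.rootedSum M).sup_mono_s18 (φ i) b (RootedRel.root (some ⟨i, w i⟩)) hroot
  exact hw i ((CN4KModel.sup_rootedSum_some M (φ i) b i (w i)).mp hi)

theorem CN4KModel.forall_sup_or_forall_sup_of_forall_sup_or (φ χ : MFm) (b : Bool)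
    (h : ∀ (F : CN4KFrame) (M : CN4KModel F) (w : F.W), M.sup φ b w ∨ M.sup χ b w) :
    (∀ (F : CN4KFrame) (M : CN4KModel F) (w : F.W), M.sup φ b w) ∨
      ∀ (F : CN4KFrame) (M : CN4KModel F) (w : F.W), M.sup χ b w := by
  obtain ⟨(_ | _), hvalid⟩ := exists_forall_sup_of_forall_exists_sup (fun i => cond i φ χ) b
    fun F M w => (h F M w).elim (⟨true, ·⟩) (⟨false, ·⟩)
  exacts [.inr hvalid, .inl hvalid]

/-- Disjunction property and constructive falsity property of CN4K:
if `φ∨χ` is valid then `φ` or `χ` is valid, and if `∼(φ∧χ)` is valid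
then `∼φ` or `∼χ` is valid. -/
theorem cn4k_disjunction_and_constructive_falsity (φ χ : MFm) :
    (CN4KValid (.disj φ χ) → CN4KValid φ ∨ CN4KValid χ) ∧
    (CN4KValid (.neg (.conj φ χ)) → CN4KValid (.neg φ) ∨ CN4KValid (.neg χ)) :=
  ⟨CN4KModel.forall_sup_or_forall_sup_of_forall_sup_or φ χ true,
    CN4KModel.forall_sup_or_forall_sup_of_forall_sup_or φ χ false⟩
end
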